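/- arXiv:2508.18946 — 9 statements merged into one kernel-verified Lean document; each statement's English description precedes it below -/
import Mathlib

section
/- Let a, n ∈ ℤ with a ≥ 1 and n ≥ 2, and let p be a prime with p > a + 1. Then f_{n,a,p}(x) = x^n − a·x^{n−1} − p is a strictly-Perron polynomial: it is irreducible over ℚ and has a real root λ > 1 such that every complex root α ≠ λ satisfies |α| < λ, some complex root α ≠ λ satisfies |α| ≥ 1, λ^{-1} is not a root of f_{n,a,p}, and it is not the case that exactly one complex root of f_{n,a,p} has modulus < 1 while some root other than λ has modulus > 1. -/
/-
Writing `n = m + 1`, a complex root `z` of `f_{n,a,p}` satisfies `z ^ m * (z - a) = p`. If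
`‖z‖ ≤ 1` the left side has norm at most `1 + a < p`, so every root lies outside the closed unit
disk. This excludes the Pisot, anti-Pisot and Salem cases, and gives irreducibility: the
constant terms of two monic integer factors of positive degree are, up to sign, products of roots,
hence both exceed `1` in absolute value, while their product is `-p`.

The real root `λ > a` of `t ^ m * (t - a) = p` dominates: for any other root,
`‖z‖ ^ m * (‖z‖ - a) ≤ ‖z‖ ^ m * ‖z - a‖ = p`, so `‖z‖ ≤ λ`, and equality forces `z - a` to be a
positive real, i.e. `z = λ`. Irreducibility over `ℚ` makes the roots simple, so there is a root
other than `λ`.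
-/

open Polynomial

/-- The polynomial `f_{n,a,p}(x) = x^n - a*x^(n-1) - p` in `ℤ[x]`. -/
noncomputable def fnap (n : ℕ) (a p : ℤ) : Polynomial ℤ :=
  X ^ n - C a * X ^ (n - 1) - C p

/-- `f` is a strictly-Perron polynomial: it is irreducible over `ℚ` and has a real root
`λ > 1` which is a Perron number that is neither Pisot, nor Salem, nor anti-Pisot. -/
def IsStrictlyPerron (f : Polynomial ℤ) : Prop :=
  Irreducible (f.map (algebraMap ℤ ℚ)) ∧
  ∃ lam : ℝ, 1 < lam ∧ Polynomial.aeval lam f = 0 ∧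
    (∀ α : ℂ, Polynomial.aeval α f = 0 → α ≠ (lam : ℂ) → ‖α‖ < lam) ∧
    (∃ α : ℂ, Polynomial.aeval α f = 0 ∧ α ≠ (lam : ℂ) ∧ 1 ≤ ‖α‖) ∧
    Polynomial.aeval (lam⁻¹) f ≠ 0 ∧
    ¬ ((∃! α : ℂ, Polynomial.aeval α f = 0 ∧ ‖α‖ < 1) ∧
       (∃ β : ℂ, Polynomial.aeval β f = 0 ∧ β ≠ (lam : ℂ) ∧ 1 < ‖β‖))

lemma Complex.eq_norm_of_norm_add_ofReal_eq {w : ℂ} {r : ℝ} (hr : 0 < r)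
    (h : ‖w + r‖ = ‖w‖ + r) : w = ‖w‖ := by
  conv_rhs at h => rw [← abs_of_pos hr, ← Real.norm_eq_abs, ← Complex.norm_real]
  rcases Complex.norm_add_eq_iff.mp h with rfl | hr0 | harg
  · simp
  · exact absurd hr0 (by exact_mod_cast hr.ne')
  · rw [Complex.arg_ofReal_of_nonneg hr.le, Complex.arg_eq_zero_iff] at harg
    exact Complex.eq_coe_norm_of_nonneg (Complex.nonneg_iff.mpr ⟨harg.1, harg.2.symm⟩)

section PowMulSub

variable {m : ℕ} {a p : ℝ}

lemma one_lt_norm_of_pow_mul_sub_eq (ha : 0 ≤ a) (hp : a + 1 < p) {z : ℂ}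
    (hz : z ^ m * (z - a) = p) : 1 < ‖z‖ := by
  by_contra! hz1
  have : p ≤ 1 + a :=
    calc p = ‖z‖ ^ m * ‖z - a‖ := by
          rw [← norm_pow, ← norm_mul, hz, Complex.norm_real, Real.norm_eq_abs,
            abs_of_pos (by linarith)]
      _ ≤ 1 * (‖z‖ + ‖(a : ℂ)‖) := by
          gcongr
          · exact pow_le_one₀ (norm_nonneg z) hz1
          · exact norm_sub_le z a
      _ ≤ 1 + a := by simp [abs_of_nonneg ha, hz1]
  linarith

lemma exists_one_lt_pow_mul_sub_eq (m : ℕ) (ha : 0 ≤ a) (hp : a + 1 < p) :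
    ∃ lam : ℝ, 1 < lam ∧ a < lam ∧ lam ^ m * (lam - a) = p := by
  have hcont : ContinuousOn (fun t : ℝ ↦ t ^ m * (t - a)) (Set.Icc 1 (a + p)) := by fun_prop
  have hp_mem : p ∈ Set.Icc ((1 : ℝ) ^ m * (1 - a)) ((a + p) ^ m * (a + p - a)) := by
    constructor
    · simp only [one_pow, one_mul, tsub_le_iff_right]
      linarith
    · rw [add_sub_cancel_left]
      exact le_mul_of_one_le_left (by linarith) (one_le_pow₀ (by linarith))
  obtain ⟨lam, hlam, hlam_eq⟩ := intermediate_value_Icc (by linarith) hcont hp_mem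
  refine ⟨lam, lt_of_le_of_ne hlam.1 ?_, ?_, hlam_eq⟩
  · rintro rfl
    simp only [one_pow, one_mul] at hlam_eq
    linarith
  · by_contra! hle
    have : lam ^ m * (lam - a) ≤ 0 :=
      mul_nonpos_of_nonneg_of_nonpos (pow_nonneg (by linarith [hlam.1]) m) (by linarith)
    linarith

lemma norm_lt_of_pow_mul_sub_eq (ha : 0 < a) {lam : ℝ} (hlam : a < lam) {z : ℂ}
    (hz : z ^ m * (z - a) = (lam : ℂ) ^ m * (lam - a)) (hne : z ≠ lam) : ‖z‖ < lam := by
  have hlam0 : 0 < lam := ha.trans hlam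
  have hnorm : ‖z‖ ^ m * ‖z - a‖ = lam ^ m * (lam - a) := by
    rw [← norm_pow, ← norm_mul, hz, ← Complex.ofReal_pow, ← Complex.ofReal_sub,
      ← Complex.ofReal_mul, Complex.norm_real, Real.norm_eq_abs, abs_of_pos (by positivity)]
  have hsub : ‖z‖ - a ≤ ‖z - a‖ := by
    simpa [abs_of_pos ha] using norm_sub_norm_le z (a : ℂ)
  have hle : ‖z‖ ≤ lam := by
    by_contra! hlt
    have : lam ^ m * (lam - a) < ‖z‖ ^ m * (‖z‖ - a) :=
      mul_lt_mul' (pow_le_pow_left₀ hlam0.le hlt.le m) (by linarith) (by linarith)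
        (pow_pos (hlam0.trans hlt) m)
    have : ‖z‖ ^ m * (‖z‖ - a) ≤ ‖z‖ ^ m * ‖z - a‖ := by gcongr
    linarith
  refine lt_of_le_of_ne hle fun heq ↦ hne ?_
  have hza : ‖z - a‖ = lam - a := by
    rw [heq] at hnorm
    exact mul_left_cancel₀ (pow_pos hlam0 m).ne' hnorm
  have hray := Complex.eq_norm_of_norm_add_ofReal_eq (w := z - a) ha
    (by rw [sub_add_cancel, hza, heq]; ring)
  rw [hza] at hray
  push_cast at hray
  linear_combination hray

end PowMulSub

lemma Polynomial.Monic.one_lt_abs_coeff_zero_of_one_lt_norm_roots {g : ℤ[X]} (hg : g.Monic)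
    (hdeg : g.natDegree ≠ 0) (hroots : ∀ z : ℂ, aeval z g = 0 → 1 < ‖z‖) :
    1 < |g.coeff 0| := by
  have hne : g.aroots ℂ ≠ 0 := by
    rw [← Multiset.card_pos, IsAlgClosed.card_aroots_eq_natDegree]
    exact Nat.pos_of_ne_zero hdeg
  have hprod : 1 < ((g.aroots ℂ).map (‖·‖)).prod := by
    simpa using Multiset.prod_map_lt_prod_map hne (fun _ ↦ (1 : ℝ)) (‖·‖) (by simp)
      fun z hz ↦ hroots z (mem_aroots.mp hz).2
  have hcoeff := (IsAlgClosed.splits (g.map (algebraMap ℤ ℂ))).coeff_zero_eq_prod_roots_of_monic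
    (hg.map _)
  have hnorm : |(g.coeff 0 : ℝ)| = ((g.aroots ℂ).map (‖·‖)).prod := by
    rw [← Complex.norm_intCast, ← eq_intCast (algebraMap ℤ ℂ), ← coeff_map, hcoeff, norm_mul,
      norm_pow, norm_neg, norm_one, one_pow, one_mul]
    exact map_multiset_prod (normHom : ℂ →*₀ ℝ) _
  exact_mod_cast hnorm ▸ hprod

lemma Polynomial.Monic.irreducible_of_prime_coeff_zero_of_one_lt_norm_roots {f : ℤ[X]}
    (hf : f.Monic) (hprime : Prime (f.coeff 0)) (hroots : ∀ z : ℂ, aeval z f = 0 → 1 < ‖z‖) :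
    Irreducible f := by
  refine hf.irreducible_iff_natDegree.mpr ⟨fun h ↦ ?_, fun g h hg hh hgh ↦ ?_⟩
  · simp [h, coeff_one_zero] at hprime
  by_contra! hdeg
  have hg0 := hg.one_lt_abs_coeff_zero_of_one_lt_norm_roots hdeg.1
    fun z hz ↦ hroots z (by rw [← hgh, map_mul, hz, zero_mul])
  have hh0 := hh.one_lt_abs_coeff_zero_of_one_lt_norm_roots hdeg.2
    fun z hz ↦ hroots z (by rw [← hgh, map_mul, hz, mul_zero])
  rw [← hgh, mul_coeff_zero] at hprime
  rcases hprime.irreducible.isUnit_or_isUnit rfl with hunit | hunit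
  · exact hg0.ne' (Int.isUnit_iff_abs_eq.mp hunit)
  · exact hh0.ne' (Int.isUnit_iff_abs_eq.mp hunit)

lemma Irreducible.exists_aeval_eq_zero_ne {K L : Type*} [Field K] [CharZero K] [Field L]
    [IsAlgClosed L] [Algebra K L] {g : K[X]} (hg : Irreducible g) (hdeg : 2 ≤ g.natDegree)
    (x : L) : ∃ y : L, aeval y g = 0 ∧ y ≠ x := by
  have hcard :=
    card_rootSet_eq_natDegree hg.separable (IsAlgClosed.splits (g.map (algebraMap K L)))
  rw [← Nat.card_eq_fintype_card, Nat.card_coe_set_eq] at hcard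
  obtain ⟨y, hy, hne⟩ := (g.rootSet L).exists_ne_of_one_lt_ncard (by omega) x
  exact ⟨y, (mem_rootSet.mp hy).2, hne⟩

section Fnap

variable (m : ℕ) (a p : ℤ)

lemma monic_fnap_succ : (fnap (m + 1) a p).Monic := by
  unfold fnap; monicity!

lemma natDegree_fnap_succ : (fnap (m + 1) a p).natDegree = m + 1 := by
  unfold fnap; compute_degree!

lemma coeff_zero_fnap_succ (hm : m ≠ 0) : (fnap (m + 1) a p).coeff 0 = -p := by
  simp [fnap, coeff_X_pow, Ne.symm hm]

lemma aeval_fnap_succ {R : Type*} [CommRing R] (x : R) :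
    aeval x (fnap (m + 1) a p) = x ^ m * (x - a) - p := by
  simp only [fnap, eq_intCast, add_tsub_cancel_right, aeval_sub, map_pow, aeval_X, map_mul,
    map_intCast]
  ring

end Fnap

lemma aeval_ofReal_eq_zero_iff {f : ℤ[X]} {x : ℝ} : aeval (x : ℂ) f = 0 ↔ aeval x f = 0 := by
  rw [← Complex.coe_algebraMap, aeval_algebraMap_apply, Complex.coe_algebraMap,
    Complex.ofReal_eq_zero]

theorem stmt_2 (a : ℤ) (n : ℕ) (p : ℕ) (ha : 1 ≤ a) (hn : 2 ≤ n) (hp : p.Prime)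
    (hpa : a + 1 < (p : ℤ)) :
    IsStrictlyPerron (fnap n a (p : ℤ)) := by
  obtain ⟨m, rfl⟩ : ∃ m, n = m + 1 := ⟨n - 1, by omega⟩
  have ha' : (0 : ℝ) < a := by exact_mod_cast ha
  have hpa' : (a : ℝ) + 1 < p := by exact_mod_cast hpa
  have hroot (z : ℂ) : aeval z (fnap (m + 1) a p) = 0 ↔ z ^ m * (z - (a : ℝ)) = (p : ℝ) := by
    rw [aeval_fnap_succ, sub_eq_zero]
    push_cast
    rfl
  have hbig (z : ℂ) (hz : aeval z (fnap (m + 1) a p) = 0) : 1 < ‖z‖ :=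
    one_lt_norm_of_pow_mul_sub_eq ha'.le hpa' ((hroot z).mp hz)
  have hprime : Prime ((fnap (m + 1) a p).coeff 0) := by
    rw [coeff_zero_fnap_succ m a p (by omega)]
    exact (Nat.prime_iff_prime_int.mp hp).neg
  have hirr : Irreducible ((fnap (m + 1) a p).map (algebraMap ℤ ℚ)) :=
    (monic_fnap_succ m a p).irreducible_iff_irreducible_map_fraction_map.mp
      ((monic_fnap_succ m a p).irreducible_of_prime_coeff_zero_of_one_lt_norm_roots hprime hbig)
  obtain ⟨lam, hlam1, hlam_a, hlam⟩ := exists_one_lt_pow_mul_sub_eq m ha'.le hpa'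
  have hlamC : aeval (lam : ℂ) (fnap (m + 1) a p) = 0 := (hroot _).mpr (by exact_mod_cast hlam)
  refine ⟨hirr, lam, hlam1, aeval_ofReal_eq_zero_iff.mp hlamC, fun α hα hne ↦ ?_, ?_,
    fun hinv ↦ ?_, ?_⟩
  · refine norm_lt_of_pow_mul_sub_eq (m := m) ha' hlam_a ?_ hne
    rw [(hroot α).mp hα]
    exact_mod_cast hlam.symm
  · obtain ⟨α, hα, hne⟩ := hirr.exists_aeval_eq_zero_ne
      (by rw [(monic_fnap_succ m a p).natDegree_map, natDegree_fnap_succ]; omega) (lam : ℂ)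
    rw [aeval_map_algebraMap] at hα
    exact ⟨α, hα, hne, (hbig α hα).le⟩
  · have := hbig _ (aeval_ofReal_eq_zero_iff.mpr hinv)
    rw [Complex.norm_real, Real.norm_eq_abs, abs_of_pos (by positivity)] at this
    exact (inv_lt_one_of_one_lt₀ hlam1).not_gt this
  · rintro ⟨⟨α, ⟨hα, hlt⟩, -⟩, -⟩
    exact (hbig α hα).not_gt hlt
end

section
/- Let a, n, p ∈ ℤ with a ≥ 1, n ≥ 2 and p a prime. Then f_{n,a,p}(x) = x^n − a·x^{n−1} − p is irreducible over ℚ if and only if it is not the case that n is even and p = a + 1. -/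
/-!
Every complex root `α` of `f = fnap n a p` satisfies `α ^ (n - 1) * (α - a) = p`. Hence for a monic
factor `g` of `f` over `ℤ`, multiplying over the roots of `g` gives
`|g 0| ^ (n - 1) * |g a| = p ^ deg g`. As `f 0 = f a = -p`, in a factorisation `f = g * h` into
monic factors one of them, say `g`, has `|g 0| = 1`, so `|g a| = p ^ deg g` divides `p` and
`deg g ≤ 1`. A linear such `g` would make `1` or `-1` a root of `f`; `f 1 < 0`, and `f (-1) = 0`
exactly when `n` is even and `p = a + 1`, in which case `X + 1` is a proper factor.
-/

open Polynomial

theorem abs_eval_zero_pow_mul_abs_eval_eq_pow {g : ℤ[X]} (hg : g.Monic) (a : ℤ) (k : ℕ) (c : ℝ)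
    (hroots : ∀ α ∈ g.aroots ℂ, ‖α‖ ^ k * ‖α - a‖ = c) :
    |((g.eval 0 : ℤ) : ℝ)| ^ k * |((g.eval a : ℤ) : ℝ)| = c ^ g.natDegree := by
  have hsplit := IsAlgClosed.splits (g.map (algebraMap ℤ ℂ))
  have hnorm (x : ℂ) : ‖aeval x g‖ = ((g.aroots ℂ).map (‖x - ·‖)).prod := by
    rw [hsplit.aeval_eq_prod_aroots_of_monic hg, ← normHom_apply, map_multiset_prod,
      Multiset.map_map]
    rfl
  have hcard : (g.aroots ℂ).card = g.natDegree := by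
    rw [← hsplit.natDegree_eq_card_roots, hg.natDegree_map]
  have habs (x : ℤ) : ‖aeval (x : ℂ) g‖ = |((g.eval x : ℤ) : ℝ)| := by
    simp only [aeval_def, eval₂_at_intCast, eq_intCast, Int.cast_id, Complex.norm_intCast]
  calc |((g.eval 0 : ℤ) : ℝ)| ^ k * |((g.eval a : ℤ) : ℝ)|
        = ‖aeval (0 : ℂ) g‖ ^ k * ‖aeval (a : ℂ) g‖ := by
        rw [← habs, ← habs, Int.cast_zero]
    _ = ((g.aroots ℂ).map fun α : ℂ => ‖α‖ ^ k * ‖α - a‖).prod := by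
        rw [hnorm, hnorm, ← Multiset.prod_map_pow, ← Multiset.prod_map_mul]
        simp [norm_sub_rev]
    _ = c ^ g.natDegree := by
        rw [Multiset.map_congr rfl hroots, Multiset.map_const', Multiset.prod_replicate, hcard]

theorem fnap_aeval {R : Type*} [CommRing R] {n : ℕ} (hn : 1 ≤ n) (a p : ℤ) (x : R) :
    aeval x (fnap n a p) = x ^ (n - 1) * (x - a) - p := by
  obtain ⟨m, rfl⟩ := Nat.exists_eq_add_of_le' hn
  simp only [fnap, eq_intCast, add_tsub_cancel_right, aeval_sub, map_pow, aeval_X, map_mul,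
    map_intCast]
  ring

theorem fnap_eval {n : ℕ} (hn : 1 ≤ n) (a p x : ℤ) :
    (fnap n a p).eval x = x ^ (n - 1) * (x - a) - p := by
  simpa using fnap_aeval hn a p x

theorem fnap_monic {n : ℕ} (hn : 1 ≤ n) (a p : ℤ) : (fnap n a p).Monic := by
  unfold fnap
  monicity!
  simp [show n ≠ n - 1 by omega, show n ≠ 0 by omega]

theorem fnap_natDegree {n : ℕ} (hn : 1 ≤ n) (a p : ℤ) : (fnap n a p).natDegree = n := by
  unfold fnap
  compute_degree!
  simp [show n ≠ n - 1 by omega, show n ≠ 0 by omega]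

theorem fnap_isRoot_neg_one_iff {n : ℕ} (hn : 1 ≤ n) {a p : ℤ} (ha : 1 ≤ a) (hp : 0 ≤ p) :
    (fnap n a p).IsRoot (-1) ↔ Even n ∧ p = a + 1 := by
  rw [IsRoot, fnap_eval hn]
  rcases Nat.even_or_odd n with hev | hodd
  · have hodd : Odd (n - 1) := Nat.Even.sub_odd hn hev odd_one
    simp only [hodd.neg_one_pow, hev, true_and]
    omega
  · have hev : Even (n - 1) := Nat.Odd.sub_odd hodd odd_one
    simp only [hev.neg_one_pow, Nat.not_even_iff_odd.mpr hodd, false_and, iff_false]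
    omega

theorem fnap_not_isRoot_one {n : ℕ} (hn : 1 ≤ n) {a p : ℤ} (ha : 1 ≤ a) (hp : 0 < p) :
    ¬ (fnap n a p).IsRoot 1 := by
  rw [IsRoot, fnap_eval hn, one_pow, one_mul]
  omega

theorem natDegree_le_one_of_dvd_fnap {n : ℕ} (hn : 1 ≤ n) (a : ℤ) {p : ℕ} (hp : 2 ≤ p)
    {g : ℤ[X]} (hg : g.Monic) (hdvd : g ∣ fnap n a p) (hg0 : |g.eval 0| = 1) :
    g.natDegree ≤ 1 := by
  have hroots : ∀ α ∈ g.aroots ℂ, ‖α‖ ^ (n - 1) * ‖α - a‖ = p := by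
    intro α hα
    have hfα : aeval α (fnap n a p) = 0 := by
      obtain ⟨h, hh⟩ := hdvd
      rw [hh, map_mul, (mem_aroots.mp hα).2, zero_mul]
    rw [fnap_aeval hn, sub_eq_zero] at hfα
    simpa using congrArg norm hfα
  have hga : |g.eval a| = (p : ℤ) ^ g.natDegree := by
    have := abs_eval_zero_pow_mul_abs_eval_eq_pow hg a (n - 1) p hroots
    rw [← Int.cast_abs, hg0, Int.cast_one, one_pow, one_mul, ← Int.cast_abs] at this
    exact_mod_cast this
  have hga_dvd : |g.eval a| ∣ p := by
    obtain ⟨h, hh⟩ := hdvd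
    refine (abs_dvd _ _).mpr ⟨-h.eval a, ?_⟩
    have := congrArg (eval a) hh
    rw [fnap_eval hn, sub_self, mul_zero, zero_sub, eval_mul] at this
    rw [mul_neg, ← this, neg_neg]
  have : (p : ℤ) ^ g.natDegree ≤ (p : ℤ) ^ 1 := by
    rw [← hga, pow_one]
    exact Int.le_of_dvd (by omega) hga_dvd
  exact (pow_le_pow_iff_right₀ (by omega)).mp this

theorem isRoot_one_or_neg_one_of_dvd {F g : ℤ[X]} (hg : g.Monic) (hdeg : g.natDegree = 1)
    (hg0 : |g.eval 0| = 1) (hdvd : g ∣ F) : F.IsRoot 1 ∨ F.IsRoot (-1) := by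
  have hgX : g = X + C (g.eval 0) := by rw [← coeff_zero_eq_eval_zero]; exact hg.eq_X_add_C hdeg
  have hroot (x : ℤ) (hx : x + g.eval 0 = 0) : F.IsRoot x := by
    obtain ⟨h, rfl⟩ := hdvd
    rw [IsRoot, eval_mul, hgX]
    simp [hx]
  rcases abs_eq (zero_le_one' ℤ) |>.mp hg0 with h1 | h1
  · exact .inr (hroot _ (by omega))
  · exact .inl (hroot _ (by omega))

theorem natDegree_eq_zero_of_dvd_fnap {n : ℕ} (hn : 1 ≤ n) {a : ℤ} (ha : 1 ≤ a) {p : ℕ}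
    (hp : 2 ≤ p) (hnp : ¬ (Even n ∧ (p : ℤ) = a + 1)) {g : ℤ[X]} (hg : g.Monic)
    (hdvd : g ∣ fnap n a p) (hg0 : |g.eval 0| = 1) : g.natDegree = 0 := by
  refine (Nat.le_one_iff_eq_zero_or_eq_one.mp
    (natDegree_le_one_of_dvd_fnap hn a hp hg hdvd hg0)).resolve_right fun hdeg => ?_
  rcases isRoot_one_or_neg_one_of_dvd hg hdeg hg0 hdvd with hroot | hroot
  · exact fnap_not_isRoot_one hn ha (by omega) hroot
  · exact hnp ((fnap_isRoot_neg_one_iff hn ha (by omega)).mp hroot)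

theorem fnap_irreducible {n : ℕ} (hn : 2 ≤ n) {a : ℤ} (ha : 1 ≤ a) {p : ℕ} (hp : p.Prime)
    (hnp : ¬ (Even n ∧ (p : ℤ) = a + 1)) : Irreducible (fnap n a p) := by
  refine (fnap_monic (by omega) a p).irreducible_iff_natDegree.mpr
    ⟨fun h1 => ?_, fun g h hg hh hgh => ?_⟩
  · have := fnap_natDegree (by omega : 1 ≤ n) a p
    rw [h1, natDegree_one] at this
    omega
  · have h0 : g.eval 0 * h.eval 0 = -p := by
      rw [← eval_mul, hgh, fnap_eval (by omega), zero_pow (by omega)]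
      ring
    have hirr : Irreducible (-(p : ℤ)) := (Nat.prime_iff_prime_int.mp hp).neg.irreducible
    have hdeg {g : ℤ[X]} := natDegree_eq_zero_of_dvd_fnap (by omega) ha hp.two_le hnp (g := g)
    rcases hirr.isUnit_or_isUnit h0.symm with hu | hu
    · exact .inl (hdeg hg ⟨h, hgh.symm⟩ (Int.isUnit_iff_abs_eq.mp hu))
    · exact .inr (hdeg hh ⟨g, by rw [← hgh, mul_comm]⟩ (Int.isUnit_iff_abs_eq.mp hu))

theorem stmt_3 (a : ℤ) (n : ℕ) (p : ℕ) (ha : 1 ≤ a) (hn : 2 ≤ n) (hp : p.Prime) :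
    Irreducible ((fnap n a (p : ℤ)).map (algebraMap ℤ ℚ)) ↔
      ¬ (Even n ∧ (p : ℤ) = a + 1) := by
  have hmonic := fnap_monic (by omega : 1 ≤ n) a p
  constructor
  · rintro hirr hpa
    have hroot : ((fnap n a p).map (algebraMap ℤ ℚ)).IsRoot (-1) := by
      simpa using ((fnap_isRoot_neg_one_iff (by omega) ha (by positivity)).mpr hpa).map
        (f := algebraMap ℤ ℚ)
    refine hirr.not_isRoot_of_natDegree_ne_one ?_ hroot
    rw [hmonic.natDegree_map, fnap_natDegree (by omega)]
    omega
  · intro hnp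
    exact (IsPrimitive.Int.irreducible_iff_irreducible_map_cast hmonic.isPrimitive).mp
      (fnap_irreducible hn ha hp hnp)
end

section
/- Let n ≥ 3 be an odd integer and let p be a prime. Then every complex root α of the polynomial x^n − (p−1)·x^{n−1} − p satisfies |α| > 1. -/
/-!
Suppose `|α| ≤ 1` and put `β = α ^ (n - 1)`, so that `α ^ n = (p - 1) β + p`. Taking real
parts, `1 ≥ |α ^ n| ≥ (p - 1) Re β + p ≥ 1`, which forces `Re β = -1` and hence `β = -1`.
Then `α ^ n = 1` and `α ^ n = α β = -α`, so `α = -1`; but `n - 1` is even, so `β = 1`.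
-/

open Polynomial

namespace Complex

lemma eq_neg_one_of_norm_le_one_of_re_le {w : ℂ} (hw : ‖w‖ ≤ 1) (hre : w.re ≤ -1) :
    w = -1 := by
  have hsq : w.re * w.re + w.im * w.im ≤ 1 := by
    rw [← normSq_apply, normSq_eq_norm_sq]
    nlinarith [norm_nonneg w]
  apply Complex.ext <;> simp only [neg_re, neg_im, one_re, one_im] <;>
    nlinarith [mul_self_nonneg w.im]

lemma eq_neg_one_of_norm_mul_add_le_one {c : ℝ} (hc : 0 < c) {w : ℂ} (hw : ‖w‖ ≤ 1)
    (h : ‖c * w + (c + 1)‖ ≤ 1) : w = -1 := by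
  have hre : c * w.re + c + 1 ≤ 1 := by
    have := (re_le_norm (c * w + (c + 1))).trans h
    simpa [add_assoc] using this
  exact eq_neg_one_of_norm_le_one_of_re_le hw (by nlinarith)

lemma one_lt_norm_of_pow_eq_mul_pow_pred_add {c : ℝ} (hc : 0 < c) {n : ℕ} (hn : Odd n)
    {α : ℂ} (h : α ^ n = c * α ^ (n - 1) + (c + 1)) : 1 < ‖α‖ := by
  by_contra! hα
  have hα_pow : ∀ k, ‖α ^ k‖ ≤ 1 := fun k => by
    rw [norm_pow]; exact pow_le_one₀ (norm_nonneg α) hα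
  have hβ : α ^ (n - 1) = -1 :=
    eq_neg_one_of_norm_mul_add_le_one hc (hα_pow _) (h ▸ hα_pow n)
  have hpow_one : α ^ n = 1 := by rw [h, hβ]; ring
  have hpow_succ : α ^ n = α * α ^ (n - 1) := by
    rw [← pow_succ']; congr 1; have := hn.pos; omega
  have hα_neg : α = -1 := by
    rw [hpow_one, hβ] at hpow_succ; linear_combination hpow_succ
  have heven : Even (n - 1) := by
    obtain ⟨k, rfl⟩ := hn; exact ⟨k, by omega⟩
  rw [hα_neg, heven.neg_one_pow] at hβ
  norm_num at hβ

end Complex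

theorem stmt_4_general (n : ℕ) (p : ℕ) (hodd : Odd n) (hp : p.Prime) :
    ∀ α : ℂ, Polynomial.aeval α (fnap n ((p : ℤ) - 1) (p : ℤ)) = 0 →
      1 < ‖α‖ := by
  intro α hα
  have hp_sub_one : (0 : ℝ) < p - 1 := by
    have : (2 : ℝ) ≤ p := by exact_mod_cast hp.two_le
    linarith
  refine Complex.one_lt_norm_of_pow_eq_mul_pow_pred_add hp_sub_one hodd ?_
  simp only [fnap, map_sub, map_mul, map_pow, aeval_X, aeval_C] at hα
  push_cast at hα ⊢
  linear_combination hα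

theorem stmt_4 (n : ℕ) (p : ℕ) (hn : 3 ≤ n) (hodd : Odd n) (hp : p.Prime) :
    ∀ α : ℂ, Polynomial.aeval α (fnap n ((p : ℤ) - 1) (p : ℤ)) = 0 →
      1 < ‖α‖ :=
  stmt_4_general n p hodd hp
end

section
/- Let a, n, p ∈ ℤ with a ≥ 1, n ≥ 2 even and p ≥ 2. Then the polynomial f_{n,a,p}(x) = x^n − a·x^{n−1} − p has exactly one negative real root r; moreover, if p > a + 1, then r < −1. -/
open Polynomial

theorem stmt_9 (a : ℤ) (n : ℕ) (p : ℤ) (ha : 1 ≤ a) (hn : 2 ≤ n) (heven : Even n)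
    (hp : 2 ≤ p) :
    ∃ r : ℝ, r < 0 ∧ Polynomial.aeval r (fnap n a p) = 0 ∧
      (∀ y : ℝ, y < 0 → Polynomial.aeval y (fnap n a p) = 0 → y = r) ∧
      (a + 1 < p → r < -1) := by
  have ha' : (1:ℝ) ≤ (a:ℝ) := by exact_mod_cast ha
  have hp' : (2:ℝ) ≤ (p:ℝ) := by exact_mod_cast hp
  set g : ℝ → ℝ := fun x => x ^ n - (a:ℝ) * x ^ (n-1) - (p:ℝ) with hg
  have heval : ∀ x : ℝ, Polynomial.aeval x (fnap n a p) = g x := by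
    intro x; simp [fnap, hg]
  have hodd : Odd (n - 1) := Nat.Even.sub_odd (by omega) heven odd_one
  have hn1 : n - 1 + 1 = n := by omega
  have hex : ∀ t : ℝ, t ^ n = t ^ (n-1) * t := by
    intro t; conv_lhs => rw [← hn1, pow_succ]
  -- strict antitonicity on (-∞, 0]
  have hanti : ∀ x y : ℝ, x < y → y ≤ 0 → g y < g x := by
    intro x y hxy hy0
    have h1 : x ^ (n-1) < y ^ (n-1) := hodd.strictMono_pow hxy
    have hyn : y ^ (n-1) ≤ 0 := hodd.pow_nonpos hy0
    have hu : x ^ (n-1) < 0 := lt_of_lt_of_le h1 hyn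
    have ht : y - (a:ℝ) < 0 := by linarith
    have key : y ^ (n-1) * (y - a) < x ^ (n-1) * (x - a) :=
      calc y ^ (n-1) * (y - a) < x ^ (n-1) * (y - a) :=
            mul_lt_mul_of_neg_right h1 ht
        _ < x ^ (n-1) * (x - a) :=
            mul_lt_mul_of_neg_left (by linarith) hu
    simp only [hg]
    rw [hex x, hex y]
    nlinarith [key]
  -- existence via IVT on [-p, 0]
  have hcont : Continuous g := by
    simp only [hg]; continuity
  have hg0 : g 0 = -(p:ℝ) := by
    simp only [hg]
    rw [zero_pow (by omega), zero_pow (by omega)]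
    ring
  have hpow : (p:ℝ) ≤ (p:ℝ) ^ n := le_self_pow₀ (by linarith) (by omega)
  have hpow1 : 0 ≤ (a:ℝ) * (p:ℝ) ^ (n-1) := by positivity
  have hgmp : 0 ≤ g (-(p:ℝ)) := by
    simp only [hg]
    rw [heven.neg_pow, hodd.neg_pow]
    nlinarith
  have hle : (-(p:ℝ)) ≤ 0 := by linarith
  have := intermediate_value_Icc' hle hcont.continuousOn
  have h0mem : (0:ℝ) ∈ Set.Icc (g 0) (g (-(p:ℝ))) := by
    constructor <;> [linarith [hg0]; exact hgmp]
  obtain ⟨r, hrmem, hr⟩ := this h0mem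
  have hrne : r ≠ 0 := by
    intro h; rw [h, hg0] at hr; linarith
  have hr0 : r < 0 := lt_of_le_of_ne hrmem.2 hrne
  refine ⟨r, hr0, by rw [heval]; exact hr, ?_, ?_⟩
  · intro y hy0 hy
    rw [heval] at hy
    rcases lt_trichotomy y r with h | h | h
    · have := hanti y r h (le_of_lt hr0); rw [hr, hy] at this; linarith
    · exact h
    · have := hanti r y h (le_of_lt hy0); rw [hr, hy] at this; linarith
  · intro hap
    have hap' : (a:ℝ) + 1 < (p:ℝ) := by exact_mod_cast hap
    have hg1 : g (-1) < 0 := by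
      simp only [hg]
      rw [heven.neg_one_pow, hodd.neg_one_pow]
      linarith
    by_contra hcon
    push_neg at hcon
    rcases eq_or_lt_of_le hcon with h | h
    · rw [h, hr] at hg1; linarith
    · have := hanti (-1) r h (le_of_lt hr0); rw [hr] at this; linarith
end

section
/- Let a, n ∈ ℤ with a ≥ 1 and n ≥ 2, and let p be an integer with p > a + 1. Then every real root x of the polynomial f_{n,a,p}(x) = x^n − a·x^{n−1} − p satisfies |x| > 1. Consequently, every complex root of f_{n,a,p} of modulus less than 1 is nonreal. -/
/-!
If `‖z‖ ≤ 1` then `‖z ^ n - a z ^ (n - 1)‖ ≤ 1 + a < p`, so no root of `f_{n,a,p}` in `ℝ` or `ℂ`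
lies in the closed unit disc. In particular there are no complex roots of modulus `< 1` at all.
-/

open Polynomial

theorem aeval_fnap {A : Type*} [CommRing A] (n : ℕ) (a p : ℤ) (x : A) :
    aeval x (fnap n a p) = x ^ n - a * x ^ (n - 1) - p := by
  simp [fnap]

theorem RCLike.norm_intCast_of_nonneg {K : Type*} [RCLike K] {a : ℤ} (ha : 0 ≤ a) :
    ‖(a : K)‖ = a := by
  rw [← RCLike.ofReal_intCast, RCLike.norm_ofReal, abs_of_nonneg (by exact_mod_cast ha)]

theorem norm_pow_sub_intCast_mul_pow_le {K : Type*} [RCLike K] (n m : ℕ) {a : ℤ} (ha : 0 ≤ a)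
    {z : K} (hz : ‖z‖ ≤ 1) : ‖z ^ n - a * z ^ m‖ ≤ 1 + a := calc
  ‖z ^ n - a * z ^ m‖ ≤ ‖z ^ n‖ + ‖(a : K) * z ^ m‖ := norm_sub_le _ _
  _ = ‖z‖ ^ n + a * ‖z‖ ^ m := by rw [norm_mul, norm_pow, norm_pow, RCLike.norm_intCast_of_nonneg ha]
  _ ≤ 1 + a * 1 := by gcongr <;> exact pow_le_one₀ (norm_nonneg z) hz
  _ = 1 + a := by rw [mul_one]

theorem one_lt_norm_of_aeval_fnap_eq_zero {K : Type*} [RCLike K] (n : ℕ) {a p : ℤ}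
    (ha : 0 ≤ a) (hpa : a + 1 < p) {z : K} (hz : aeval z (fnap n a p) = 0) : 1 < ‖z‖ := by
  by_contra! hz_le
  have hp_le : (p : ℝ) ≤ 1 + a := calc
    (p : ℝ) = ‖(p : K)‖ := (RCLike.norm_intCast_of_nonneg (by omega)).symm
    _ = ‖z ^ n - a * z ^ (n - 1)‖ := by rw [← sub_eq_zero.mp ((aeval_fnap n a p z).symm.trans hz)]
    _ ≤ 1 + a := norm_pow_sub_intCast_mul_pow_le n (n - 1) ha hz_le
  have hpa' : (a : ℝ) + 1 < p := by exact_mod_cast hpa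
  linarith

theorem stmt_12_general (a : ℤ) (n : ℕ) (p : ℤ) (ha : 1 ≤ a)
    (hpa : a + 1 < p) :
    (∀ x : ℝ, Polynomial.aeval x (fnap n a p) = 0 → 1 < |x|) ∧
      ∀ α : ℂ, Polynomial.aeval α (fnap n a p) = 0 → ‖α‖ < 1 →
        α.im ≠ 0 := by
  have ha₀ : 0 ≤ a := by omega
  refine ⟨fun x hx => ?_, fun α hα hα_lt => ?_⟩
  · simpa using one_lt_norm_of_aeval_fnap_eq_zero n ha₀ hpa hx
  · exact absurd (one_lt_norm_of_aeval_fnap_eq_zero n ha₀ hpa hα) (by linarith)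

theorem stmt_12 (a : ℤ) (n : ℕ) (p : ℤ) (ha : 1 ≤ a) (hn : 2 ≤ n)
    (hpa : a + 1 < p) :
    (∀ x : ℝ, Polynomial.aeval x (fnap n a p) = 0 → 1 < |x|) ∧
      ∀ α : ℂ, Polynomial.aeval α (fnap n a p) = 0 → ‖α‖ < 1 →
        α.im ≠ 0 :=
  stmt_12_general a n p ha hpa
end

section
/- Let n ≥ 2 and let f(x) = x^n + a_{n−1}x^{n−1} + a_{n−2}x^{n−2} + ⋯ + a_1 x + a_0 ∈ ℤ[x] with a_0 ≠ 0. If |a_{n−1}| > 1 + |a_{n−2}| + |a_{n−3}| + ⋯ + |a_0|, then f is irreducible over ℚ. -/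
/-!
If `f = g * h` with monic integer factors of positive degree, then `|g(0)|, |h(0)| ≥ 1`, so each
factor has a complex root `α`, `β` of modulus at least `1`. Writing `A = |a_{n-1}|` and
`S = |a_0| + ⋯ + |a_{n-2}|`, any root `z` of `f` with `|z| ≥ 1` satisfies `|z| (A - |z|) ≤ S`,
hence `|z| ≥ A - 1 ≥ S + 1` since `A ≥ S + 2` for integers. Dividing `f` by `X - α` gives a monic
quotient whose lower coefficients are at most `S / |α|` in modulus, so Cauchy's bound puts its
root `β` inside `|β| < 1 + S / |α|`, contradicting `|α| (|β| - 1) ≥ (S + 1) S ≥ S`.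
-/

open Polynomial Finset

namespace Polynomial

theorem sum_range_succ_coeff_X_sub_C_mul_mul_pow {R : Type*} [CommRing R] (q : R[X]) (a : R)
    (l : ℕ) :
    ∑ k ∈ range (l + 1), ((X - C a) * q).coeff k * a ^ k = -(q.coeff l * a ^ (l + 1)) := by
  induction l with
  | zero => simp [mul_coeff_zero]; ring
  | succ l ih =>
    rw [sum_range_succ, ih, sub_mul, coeff_sub, coeff_X_mul, coeff_C_mul]
    ring

variable {K : Type*} [NormedField K]

theorem norm_sum_range_mul_pow_mul_norm_le (c : ℕ → K) {z : K} (hz : 1 ≤ ‖z‖) (n : ℕ) :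
    ‖∑ k ∈ range n, c k * z ^ k‖ * ‖z‖ ≤ (∑ k ∈ range n, ‖c k‖) * ‖z‖ ^ n := by
  calc ‖∑ k ∈ range n, c k * z ^ k‖ * ‖z‖
      ≤ (∑ k ∈ range n, ‖c k‖ * ‖z‖ ^ k) * ‖z‖ := by
        gcongr
        refine (norm_sum_le _ _).trans_eq ?_
        simp only [norm_mul, norm_pow]
    _ = ∑ k ∈ range n, ‖c k‖ * ‖z‖ ^ (k + 1) := by
        rw [sum_mul]
        exact sum_congr rfl fun k _ => by ring
    _ ≤ ∑ k ∈ range n, ‖c k‖ * ‖z‖ ^ n := by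
        gcongr with k hk
        exact mem_range.mp hk
    _ = (∑ k ∈ range n, ‖c k‖) * ‖z‖ ^ n := by rw [sum_mul]

theorem Monic.norm_mul_norm_coeff_sub_norm_le {p : K[X]} (hp : p.Monic) {m : ℕ}
    (hdeg : p.natDegree = m + 1) {z : K} (hz : p.IsRoot z) (hz1 : 1 ≤ ‖z‖) :
    ‖z‖ * (‖p.coeff m‖ - ‖z‖) ≤ ∑ i ∈ range m, ‖p.coeff i‖ := by
  have hz0 : 0 < ‖z‖ := one_pos.trans_le hz1
  have hsplit : z ^ m * (z + p.coeff m) = -∑ i ∈ range m, p.coeff i * z ^ i := by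
    have heval := hz.eq_zero
    rw [eval_eq_sum_range, hdeg, sum_range_succ, sum_range_succ, ← hdeg, hp.coeff_natDegree,
      hdeg] at heval
    linear_combination heval
  have hlower : ‖z‖ ^ m * (‖p.coeff m‖ - ‖z‖) ≤ ‖∑ i ∈ range m, p.coeff i * z ^ i‖ := by
    calc ‖z‖ ^ m * (‖p.coeff m‖ - ‖z‖) ≤ ‖z‖ ^ m * ‖z + p.coeff m‖ := by
          gcongr
          have := norm_sub_le (z + p.coeff m) z
          rw [add_sub_cancel_left] at this
          linarith
      _ = ‖∑ i ∈ range m, p.coeff i * z ^ i‖ := by rw [← norm_pow, ← norm_mul, hsplit, norm_neg]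
  have := (mul_le_mul_of_nonneg_right hlower hz0.le).trans
    (norm_sum_range_mul_pow_mul_norm_le p.coeff hz1 m)
  nlinarith [pow_pos hz0 m]

theorem Monic.norm_coeff_sub_one_le_norm_of_isRoot {p : K[X]} (hp : p.Monic) {m : ℕ}
    (hdeg : p.natDegree = m + 1) (hdom : ∑ i ∈ range m, ‖p.coeff i‖ + 1 < ‖p.coeff m‖)
    {z : K} (hz : p.IsRoot z) (hz1 : 1 ≤ ‖z‖) :
    ‖p.coeff m‖ - 1 ≤ ‖z‖ := by
  have := hp.norm_mul_norm_coeff_sub_norm_le hdeg hz hz1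
  by_contra! h
  nlinarith

theorem norm_coeff_mul_norm_le_of_eq_X_sub_C_mul {p q : K[X]} {a : K}
    (hpq : p = (X - C a) * q) (ha : 1 ≤ ‖a‖) (l : ℕ) :
    ‖q.coeff l‖ * ‖a‖ ≤ ∑ k ∈ range (l + 1), ‖p.coeff k‖ := by
  have hsum := norm_sum_range_mul_pow_mul_norm_le p.coeff ha (l + 1)
  rw [hpq, sum_range_succ_coeff_X_sub_C_mul_mul_pow, norm_neg, norm_mul, norm_pow, ← hpq] at hsum
  have := pow_pos (one_pos.trans_le ha) (l + 1)
  nlinarith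

theorem Monic.norm_lt_of_isRoot_of_norm_coeff_le {q : K[X]} (hq : q.Monic) {B : ℝ} (hB : 0 ≤ B)
    (hcoeff : ∀ l < q.natDegree, ‖q.coeff l‖ ≤ B) {z : K} (hz : q.IsRoot z) :
    ‖z‖ < B + 1 := by
  have hbound := hz.norm_lt_cauchyBound hq.ne_zero
  have : cauchyBound q ≤ ⟨B, hB⟩ + 1 := by
    rw [cauchyBound, hq.leadingCoeff, nnnorm_one, div_one]
    refine add_le_add_left (Finset.sup_le fun l hl => ?_) 1
    exact_mod_cast hcoeff l (mem_range.mp hl)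
  exact_mod_cast hbound.trans_le this

theorem Monic.not_X_sub_C_mul_X_sub_C_dvd {p : K[X]} (hp : p.Monic) {m : ℕ}
    (hdeg : p.natDegree = m + 1) (hdom : ∑ i ∈ range m, ‖p.coeff i‖ + 2 ≤ ‖p.coeff m‖)
    {a b : K} (ha : 1 ≤ ‖a‖) (hb : 1 ≤ ‖b‖) :
    ¬(X - C a) * (X - C b) ∣ p := by
  rintro ⟨w, hw⟩
  set S := ∑ i ∈ range m, ‖p.coeff i‖
  have hS : 0 ≤ S := sum_nonneg fun i _ => norm_nonneg _
  set q := (X - C b) * w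
  have hpq : p = (X - C a) * q := by rw [hw, mul_assoc]
  have hlarge : ∀ z, p.IsRoot z → 1 ≤ ‖z‖ → S + 1 ≤ ‖z‖ := fun z hz hz1 => by
    linarith [hp.norm_coeff_sub_one_le_norm_of_isRoot hdeg (by linarith) hz hz1]
  have haS := hlarge a (by simp [hpq]) ha
  have hbS := hlarge b (by simp [hpq, q]) hb
  have hq : q.Monic := (monic_X_sub_C a).of_mul_monic_left (hpq ▸ hp)
  have hqdeg : q.natDegree = m := by
    have := (monic_X_sub_C a).natDegree_mul hq
    rw [← hpq, hdeg, natDegree_X_sub_C] at this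
    omega
  have hcoeff : ∀ l < q.natDegree, ‖q.coeff l‖ ≤ S / ‖a‖ := fun l hl => by
    rw [le_div_iff₀ (by linarith)]
    refine (norm_coeff_mul_norm_le_of_eq_X_sub_C_mul hpq ha l).trans ?_
    exact sum_le_sum_of_subset_of_nonneg (range_subset_range.mpr (by omega))
      fun i _ _ => norm_nonneg _
  have hcauchy := hq.norm_lt_of_isRoot_of_norm_coeff_le (by positivity) hcoeff
    (show q.IsRoot b by simp [q])
  rw [← sub_lt_iff_lt_add, lt_div_iff₀ (by linarith)] at hcauchy
  nlinarith

theorem Monic.exists_isRoot_one_le_norm [IsAlgClosed K] {p : K[X]} (hp : p.Monic)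
    (hdeg : p.natDegree ≠ 0) (h0 : 1 ≤ ‖p.coeff 0‖) : ∃ z, p.IsRoot z ∧ 1 ≤ ‖z‖ := by
  have hsplit := IsAlgClosed.splits p
  have hroots : p.roots ≠ 0 :=
    Multiset.card_pos.mp (hsplit.natDegree_eq_card_roots ▸ Nat.pos_of_ne_zero hdeg)
  obtain ⟨z, hz, hmax⟩ := Multiset.exists_max_image (‖·‖) hroots
  refine ⟨z, isRoot_of_mem_roots hz, ?_⟩
  have hprod : ‖p.coeff 0‖ ≤ ‖z‖ ^ p.natDegree := by
    rw [hsplit.coeff_zero_eq_prod_roots_of_monic hp, norm_mul, norm_pow, norm_neg, norm_one,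
      one_pow, one_mul, hsplit.natDegree_eq_card_roots, ← normHom_apply, map_multiset_prod]
    exact Multiset.prod_map_le_pow_card (fun x _ => norm_nonneg x) hmax
  exact (one_le_pow_iff_of_nonneg (norm_nonneg z) hdeg).mp (h0.trans hprod)

theorem Monic.exists_isRoot_map_complex_one_le_norm {g : ℤ[X]} (hg : g.Monic)
    (hdeg : g.natDegree ≠ 0) (h0 : g.coeff 0 ≠ 0) :
    ∃ z : ℂ, (g.map (Int.castRingHom ℂ)).IsRoot z ∧ 1 ≤ ‖z‖ := by
  refine (hg.map _).exists_isRoot_one_le_norm (by rwa [hg.natDegree_map]) ?_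
  rw [coeff_map, eq_intCast, Complex.norm_intCast]
  exact_mod_cast Int.one_le_abs h0

end Polynomial

theorem stmt_13_general (n : ℕ) (f : Polynomial ℤ) (hmonic : f.Monic)
    (hdeg : f.natDegree = n) (h0 : f.coeff 0 ≠ 0)
    (hdom : 1 + ∑ i ∈ Finset.range (n - 1), |f.coeff i| < |f.coeff (n - 1)|) :
    Irreducible (f.map (algebraMap ℤ ℚ)) := by
  obtain _ | m := n
  · simp [hmonic.natDegree_eq_zero.mp hdeg] at hdom
  rw [← hmonic.irreducible_iff_irreducible_map_fraction_map, hmonic.irreducible_iff_natDegree]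
  refine ⟨fun h1 => by simp [h1] at hdeg, fun g h hg hh hgh => ?_⟩
  by_contra! hfactor
  have hcoeff0 : g.coeff 0 * h.coeff 0 ≠ 0 := by rwa [← mul_coeff_zero, hgh]
  obtain ⟨α, hα, hα1⟩ :=
    hg.exists_isRoot_map_complex_one_le_norm hfactor.1 (left_ne_zero_of_mul hcoeff0)
  obtain ⟨β, hβ, hβ1⟩ :=
    hh.exists_isRoot_map_complex_one_le_norm hfactor.2 (right_ne_zero_of_mul hcoeff0)
  have hnorm : ∀ i, ‖(f.map (Int.castRingHom ℂ)).coeff i‖ = |f.coeff i| := fun i => by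
    rw [coeff_map, eq_intCast, Complex.norm_intCast, Int.cast_abs]
  refine (hmonic.map (Int.castRingHom ℂ)).not_X_sub_C_mul_X_sub_C_dvd (m := m)
    (by rwa [hmonic.natDegree_map]) ?_ hα1 hβ1 ?_
  · simp only [hnorm, add_tsub_cancel_right] at hdom ⊢
    exact_mod_cast (by omega : ∑ i ∈ range m, |f.coeff i| + 2 ≤ |f.coeff m|)
  · rw [← hgh, Polynomial.map_mul]
    exact mul_dvd_mul (dvd_iff_isRoot.mpr hα) (dvd_iff_isRoot.mpr hβ)

theorem stmt_13 (n : ℕ) (hn : 2 ≤ n) (f : Polynomial ℤ) (hmonic : f.Monic)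
    (hdeg : f.natDegree = n) (h0 : f.coeff 0 ≠ 0)
    (hdom : 1 + ∑ i ∈ Finset.range (n - 1), |f.coeff i| < |f.coeff (n - 1)|) :
    Irreducible (f.map (algebraMap ℤ ℚ)) :=
  stmt_13_general n f hmonic hdeg h0 hdom
end

section
/- Let n ≥ 2 and let f(x) = x^n + a_{n−1}x^{n−1} + a_{n−2}x^{n−2} + ⋯ + a_1 x + a_0 ∈ ℤ[x]. If |a_0| is a prime number and |a_0| > 1 + |a_{n−1}| + |a_{n−2}| + ⋯ + |a_1|, then f is irreducible over ℚ. -/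
/-!
Every complex root `z` of `f` has `|z| > 1`: otherwise `|a₀| = |∑_{i ≥ 1} aᵢ zⁱ| ≤ 1 + ∑ |aᵢ|`.
In a factorisation `f = g h` over `ℤ`, primality of `|a₀|` gives `|g(0)| = 1` for one factor,
whose leading coefficient is `±1`; then `|g(0)|` is the product of the absolute values of the
roots of `g`, so `g` has no roots and is a unit. Gauss's lemma passes from `ℤ[X]` to `ℚ[X]`.
-/

open Polynomial

namespace Polynomial

variable {K : Type*} [NormedField K]

theorem one_lt_norm_of_isRoot_of_sum_norm_coeff_lt {p : K[X]}
    (hdom : ∑ i ∈ Finset.Ico 1 (p.natDegree + 1), ‖p.coeff i‖ < ‖p.coeff 0‖)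
    {z : K} (hz : p.IsRoot z) : 1 < ‖z‖ := by
  by_contra! hz1
  have hsum : p.coeff 0 = -∑ i ∈ Finset.Ico 1 (p.natDegree + 1), p.coeff i * z ^ i := by
    have := hz.eq_zero
    rw [eval_eq_sum_range, Finset.range_eq_Ico,
      Finset.sum_eq_sum_Ico_succ_bot p.natDegree.succ_pos] at this
    simpa [eq_neg_iff_add_eq_zero] using this
  have : ‖p.coeff 0‖ ≤ ∑ i ∈ Finset.Ico 1 (p.natDegree + 1), ‖p.coeff i‖ := by
    calc ‖p.coeff 0‖ ≤ ∑ i ∈ Finset.Ico 1 (p.natDegree + 1), ‖p.coeff i * z ^ i‖ := by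
          rw [hsum, norm_neg]; exact norm_sum_le _ _
      _ ≤ _ := Finset.sum_le_sum fun i _ => by
          rw [norm_mul, norm_pow]
          exact mul_le_of_le_one_right (norm_nonneg _) (pow_le_one₀ (norm_nonneg z) hz1)
  exact this.not_gt hdom

theorem Splits.norm_leadingCoeff_lt_norm_coeff_zero {p : K[X]} (hp : p.Splits)
    (hdeg : p.natDegree ≠ 0) (hroots : ∀ z ∈ p.roots, 1 < ‖z‖) :
    ‖p.leadingCoeff‖ < ‖p.coeff 0‖ := by
  have hne : p.roots ≠ 0 := by
    rwa [ne_eq, ← Multiset.card_eq_zero, ← hp.natDegree_eq_card_roots]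
  have hprod : 1 < ‖p.roots.prod‖ := by
    rw [show ‖p.roots.prod‖ = (p.roots.map (‖·‖)).prod from
      map_multiset_prod (normHom : K →*₀ ℝ) p.roots]
    simpa using Multiset.prod_map_lt_prod_map hne (fun _ => (1 : ℝ)) (‖·‖)
      (fun _ _ => one_pos) hroots
  have hlead : 0 < ‖p.leadingCoeff‖ := by
    rw [norm_pos_iff, leadingCoeff_ne_zero]
    rintro rfl
    exact hdeg natDegree_zero
  rw [hp.coeff_zero_eq_leadingCoeff_mul_prod_roots, norm_mul, norm_mul, norm_pow, norm_neg,
    norm_one, one_pow, one_mul]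
  exact lt_mul_of_one_lt_right hlead hprod

theorem Monic.one_lt_norm_of_aeval_eq_zero {f : ℤ[X]} (hmonic : f.Monic)
    (hdeg : f.natDegree ≠ 0)
    (hdom : 1 + ∑ i ∈ Finset.Ico 1 f.natDegree, |f.coeff i| < |f.coeff 0|) {z : ℂ}
    (hz : aeval z f = 0) : 1 < ‖z‖ := by
  refine (f.map (Int.castRingHom ℂ)).one_lt_norm_of_isRoot_of_sum_norm_coeff_lt ?_
    (by simpa [aeval_def, eval_map] using hz)
  rw [hmonic.natDegree_map, Finset.sum_Ico_succ_top (Nat.one_le_iff_ne_zero.mpr hdeg)]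
  simp only [coeff_map, eq_intCast, Complex.norm_intCast, hmonic.coeff_natDegree]
  exact_mod_cast (add_comm _ _).trans_lt hdom

theorem isUnit_of_isUnit_coeff_zero_of_one_lt_norm_roots {g : ℤ[X]}
    (hlead : IsUnit g.leadingCoeff) (h0 : IsUnit (g.coeff 0))
    (hroots : ∀ z : ℂ, aeval z g = 0 → 1 < ‖z‖) : IsUnit g := by
  by_cases hdeg : g.natDegree = 0
  · rw [eq_C_of_natDegree_eq_zero hdeg, isUnit_C]
    rwa [leadingCoeff, hdeg] at hlead
  · set G := g.map (Int.castRingHom ℂ)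
    have hGdeg : G.natDegree = g.natDegree := natDegree_map_eq_of_isUnit_leadingCoeff _ hlead
    have hnorm : ∀ {k : ℤ}, IsUnit k → ‖(k : ℂ)‖ = 1 := fun hk => by
      rcases Int.isUnit_iff.mp hk with rfl | rfl <;> simp
    have := (IsAlgClosed.splits G).norm_leadingCoeff_lt_norm_coeff_zero (hGdeg ▸ hdeg)
      fun z hz => hroots z (by simpa [G, aeval_def, eval_map] using isRoot_of_mem_roots hz)
    rw [leadingCoeff_map_eq_of_isUnit_leadingCoeff _ hlead, coeff_map, eq_intCast, eq_intCast,
      hnorm hlead, hnorm h0] at this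
    exact absurd this (lt_irrefl 1)

end Polynomial

theorem stmt_15_general (n : ℕ) (f : Polynomial ℤ) (hmonic : f.Monic)
    (hdeg : f.natDegree = n) (hprime : (f.coeff 0).natAbs.Prime)
    (hdom : 1 + ∑ i ∈ Finset.Ico 1 n, |f.coeff i| < |f.coeff 0|) :
    Irreducible (f.map (algebraMap ℤ ℚ)) := by
  subst hdeg
  rw [← hmonic.irreducible_iff_irreducible_map_fraction_map]
  have hf : ¬IsUnit f := fun hu =>
    hprime.ne_one (Int.isUnit_iff_natAbs_eq.mp (hu.map constantCoeff))
  have hn : f.natDegree ≠ 0 := fun h => hf (hmonic.natDegree_eq_zero.mp h ▸ isUnit_one)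
  refine ⟨hf, fun g h hgh => ?_⟩
  have hlead : IsUnit (g.leadingCoeff * h.leadingCoeff) := by
    rw [← leadingCoeff_mul, ← hgh, hmonic.leadingCoeff]
    exact isUnit_one
  have hdvd : ∀ q, q ∣ f → ∀ z : ℂ, aeval z q = 0 → 1 < ‖z‖ := by
    rintro q ⟨r, hr⟩ z hz
    exact hmonic.one_lt_norm_of_aeval_eq_zero hn hdom (by rw [hr, map_mul, hz, zero_mul])
  rcases hprime.isUnit_or_isUnit (by rw [hgh, mul_coeff_zero, Int.natAbs_mul]) with hg | hh
  · refine .inl <| isUnit_of_isUnit_coeff_zero_of_one_lt_norm_roots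
      (isUnit_of_mul_isUnit_left hlead) ?_ (hdvd g (Dvd.intro h hgh.symm))
    exact Int.isUnit_iff_natAbs_eq.mpr (Nat.isUnit_iff.mp hg)
  · refine .inr <| isUnit_of_isUnit_coeff_zero_of_one_lt_norm_roots
      (isUnit_of_mul_isUnit_right hlead) ?_ (hdvd h (Dvd.intro_left g hgh.symm))
    exact Int.isUnit_iff_natAbs_eq.mpr (Nat.isUnit_iff.mp hh)

theorem stmt_15 (n : ℕ) (hn : 2 ≤ n) (f : Polynomial ℤ) (hmonic : f.Monic)
    (hdeg : f.natDegree = n) (hprime : (f.coeff 0).natAbs.Prime)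
    (hdom : 1 + ∑ i ∈ Finset.Ico 1 n, |f.coeff i| < |f.coeff 0|) :
    Irreducible (f.map (algebraMap ℤ ℚ)) :=
  stmt_15_general n f hmonic hdeg hprime hdom
end

section
/- Let a, n, p ∈ ℤ with a ≥ 1, n ≥ 2 and p a prime, and let f_{n,a,p}(x) = x^n − a·x^{n−1} − p ∈ ℤ[x]. Then the discriminant of f_{n,a,p}, defined as (−1)^{n(n−1)/2} times the resultant of f_{n,a,p} and its derivative (equivalently, the product of (α_i − α_j)^2 over all unordered pairs of roots α_i, α_j of f_{n,a,p} in ℂ counted with multiplicity), equals (−1)^{(n−1)(n+2)/2} · p^{n−2} · (n^n·p + a^n·(n−1)^{n−1}). -/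
/-!
Write `n = k + 2`. Pairing `(αᵢ - αⱼ)²` with `-(αᵢ - αⱼ)(αⱼ - αᵢ)` turns the product over
unordered pairs into `(-1)^(n(n-1)/2) ∏ᵢ f'(αᵢ)`, and `f'(x) = x^k ((k+2)x - (k+1)a)`.
The product of the roots is `±p`, read off from `f(0)`, while
`∏ᵢ ((k+2)αᵢ - (k+1)a) = (-(k+2))^n f((k+1)a/(k+2))`, which expands to
`±((k+2)^(k+2) p + a^(k+2) (k+1)^(k+1))`.
-/

open Polynomial

open Finset

theorem eval_derivative_prod_X_sub_C {R ι : Type*} [CommRing R] [DecidableEq ι]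
    (s : Finset ι) (α : ι → R) {i : ι} (hi : i ∈ s) :
    eval (α i) (derivative (∏ j ∈ s, (X - C (α j)))) = ∏ j ∈ s.erase i, (α i - α j) := by
  rw [derivative_prod_finset, eval_finsetSum, sum_eq_single_of_mem i hi]
  · simp [eval_prod]
  · intro j _ hji
    rw [eval_mul, eval_prod, prod_eq_zero (i := i) (mem_erase.2 ⟨fun h => hji h.symm, hi⟩)
      (by simp), zero_mul]

theorem sum_card_Ioi_fin (n : ℕ) : ∑ i : Fin n, #(Ioi i) = n * (n - 1) / 2 := by
  simp_rw [Fin.card_Ioi]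
  rw [Fin.sum_univ_eq_sum_range (fun i => n - 1 - i), sum_range_reflect (fun j => j) n,
    sum_range_id]

theorem prod_prod_Ioi_sub_sq {R : Type*} [CommRing R] {n : ℕ} (α : Fin n → R) :
    ∏ i, ∏ j ∈ Ioi i, (α i - α j) ^ 2 =
      (-1) ^ (n * (n - 1) / 2) * ∏ i, ∏ j ∈ univ.erase i, (α i - α j) := by
  have hsq : ∀ i j : Fin n, (α i - α j) ^ 2 = -1 * ((α i - α j) * (α j - α i)) := by
    intros; ring
  simp_rw [hsq, prod_mul_distrib, prod_const, prod_pow_eq_pow_sum, sum_card_Ioi_fin,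
    ← prod_mul_distrib]
  rw [prod_prod_Ioi_mul_eq_prod_prod_off_diag (fun x y => α y - α x)]
  simp_rw [compl_eq_univ_sdiff, sdiff_singleton_eq_erase]

theorem prod_prod_Ioi_sub_sq_eq_prod_eval_derivative {R : Type*} [CommRing R] {n : ℕ}
    (α : Fin n → R) :
    ∏ i, ∏ j ∈ Ioi i, (α i - α j) ^ 2 =
      (-1) ^ (n * (n - 1) / 2) * ∏ i, eval (α i) (derivative (∏ j, (X - C (α j)))) := by
  simp_rw [prod_prod_Ioi_sub_sq, eval_derivative_prod_X_sub_C _ α (mem_univ _)]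

theorem prod_mul_sub_eq_eval {K ι : Type*} [Field K] [Fintype ι] (α : ι → K) {b : K}
    (hb : b ≠ 0) (d : K) :
    ∏ i, (b * α i - d) = (-b) ^ Fintype.card ι * eval (d / b) (∏ i, (X - C (α i))) := by
  have h : ∀ i, b * α i - d = -b * (d / b - α i) := fun i => by field_simp; ring
  simp_rw [h, prod_mul_distrib, prod_const, card_univ, eval_prod, eval_sub, eval_X, eval_C]

section TrinomialRing

variable {R : Type*} [CommRing R] {k : ℕ}

theorem eval_derivative_trinomial (A P x : R) :
    eval x (derivative (X ^ (k + 2) - C A * X ^ (k + 1) - C P)) =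
      x ^ k * ((k + 2) * x - (k + 1) * A) := by
  simp
  ring

theorem prod_roots_of_trinomial {A P : R} {α : Fin (k + 2) → R}
    (hα : X ^ (k + 2) - C A * X ^ (k + 1) - C P = ∏ i, (X - C (α i))) :
    ∏ i, α i = (-1) ^ (k + 1) * P := by
  have h := congrArg (eval 0) hα
  simp only [eval_sub, eval_pow, eval_X, eval_mul, eval_C, eval_prod, zero_sub] at h
  rw [prod_neg, card_univ, Fintype.card_fin] at h
  simp only [ne_eq, add_eq_zero, one_ne_zero, and_false, not_false_eq_true, zero_pow,
    OfNat.ofNat_ne_zero, mul_zero, sub_zero, zero_sub] at h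
  have hsq : (-1 : R) ^ (2 * (k + 2)) = 1 := (even_two_mul _).neg_one_pow
  linear_combination -(-1) ^ (k + 2) * h - (∏ i, α i) * hsq

end TrinomialRing

section TrinomialField

variable {K : Type*} [Field K] [CharZero K] {k : ℕ} {A P : K} {α : Fin (k + 2) → K}

theorem prod_mul_sub_of_trinomial
    (hα : X ^ (k + 2) - C A * X ^ (k + 1) - C P = ∏ i, (X - C (α i))) :
    ∏ i, ((k + 2) * α i - (k + 1) * A) =
      (-1) ^ (k + 1) * ((k + 2) ^ (k + 2) * P + A ^ (k + 2) * (k + 1) ^ (k + 1)) := by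
  have hk : (k + 2 : K) ≠ 0 := by exact_mod_cast (k + 1).succ_ne_zero
  rw [prod_mul_sub_eq_eval α hk, ← hα, Fintype.card_fin]
  simp only [eval_sub, eval_pow, eval_X, eval_mul, eval_C, div_pow, mul_pow, neg_pow (k + 2 : K)]
  field_simp
  ring

theorem prod_prod_Ioi_sub_sq_of_trinomial
    (hα : X ^ (k + 2) - C A * X ^ (k + 1) - C P = ∏ i, (X - C (α i))) :
    ∏ i, ∏ j ∈ Ioi i, (α i - α j) ^ 2 = (-1) ^ ((k + 1) * (k + 4) / 2) * P ^ k *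
      ((k + 2) ^ (k + 2) * P + A ^ (k + 2) * (k + 1) ^ (k + 1)) := by
  rw [prod_prod_Ioi_sub_sq_eq_prod_eval_derivative, ← hα]
  simp_rw [eval_derivative_trinomial, prod_mul_distrib, prod_pow, prod_roots_of_trinomial hα,
    prod_mul_sub_of_trinomial hα, show k + 2 - 1 = k + 1 from rfl]
  have hexp : (k + 1) * (k + 4) / 2 = (k + 2) * (k + 1) / 2 + (k + 1) := by
    rw [show (k + 1) * (k + 4) = (k + 2) * (k + 1) + (k + 1) * 2 by ring,
      Nat.add_mul_div_right _ _ two_pos]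
  have hsign : ((-1 : K) ^ (k + 1)) ^ k = 1 := by
    rw [← pow_mul, mul_comm]
    exact (Nat.even_mul_succ_self k).neg_one_pow
  rw [mul_pow, hsign, hexp, pow_add]
  ring

end TrinomialField

theorem map_fnap {R : Type*} [CommRing R] (n : ℕ) (a p : ℤ) :
    (fnap n a p).map (algebraMap ℤ R) = X ^ n - C (a : R) * X ^ (n - 1) - C (p : R) := by
  simp [fnap]

theorem stmt_17_general (a : ℤ) (n : ℕ) (p : ℕ) (hn : 2 ≤ n)
    (α : Fin n → ℂ)
    (hα : (fnap n a (p : ℤ)).map (algebraMap ℤ ℂ) = ∏ i, (X - C (α i))) :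
    ∏ i, ∏ j ∈ Finset.Ioi i, (α i - α j) ^ 2 =
      (((-1) ^ ((n - 1) * (n + 2) / 2) * (p : ℤ) ^ (n - 2) *
        ((n : ℤ) ^ n * (p : ℤ) + a ^ n * ((n : ℤ) - 1) ^ (n - 1)) : ℤ) : ℂ) := by
  obtain ⟨k, rfl⟩ : ∃ k, n = k + 2 := ⟨n - 2, by omega⟩
  rw [map_fnap] at hα
  rw [prod_prod_Ioi_sub_sq_of_trinomial hα]
  push_cast
  ring

/-- The discriminant of `f_{n,a,p}`, computed as the product of `(α_i - α_j)^2` over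
all unordered pairs of complex roots `α_1, …, α_n` of `f_{n,a,p}` (with multiplicity),
equals `(-1)^((n-1)(n+2)/2) * p^(n-2) * (n^n * p + a^n * (n-1)^(n-1))`. -/
theorem stmt_17 (a : ℤ) (n : ℕ) (p : ℕ) (ha : 1 ≤ a) (hn : 2 ≤ n) (hp : p.Prime)
    (α : Fin n → ℂ)
    (hα : (fnap n a (p : ℤ)).map (algebraMap ℤ ℂ) = ∏ i, (X - C (α i))) :
    ∏ i, ∏ j ∈ Finset.Ioi i, (α i - α j) ^ 2 =
      (((-1) ^ ((n - 1) * (n + 2) / 2) * (p : ℤ) ^ (n - 2) *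
        ((n : ℤ) ^ n * (p : ℤ) + a ^ n * ((n : ℤ) - 1) ^ (n - 1)) : ℤ) : ℂ) :=
  stmt_17_general a n p hn α hα
end

section
/- If λ is a Perron number and k is a positive integer, then λ^k is also a Perron number. -/
/-- A Perron number: a real algebraic integer `λ > 1` such that every complex root
`α ≠ λ` of its minimal polynomial over `ℚ` satisfies `|α| < λ`. -/
def IsPerronNumber (lam : ℝ) : Prop :=
  IsIntegral ℤ lam ∧ 1 < lam ∧
    ∀ α : ℂ, Polynomial.aeval α (minpoly ℚ lam) = 0 → α ≠ (lam : ℂ) →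
      ‖α‖ < lam

/-!
A conjugate `β` of `λ ^ k` is the image of `λ ^ k` under some embedding `ψ : ℚ⟮λ⟯ → ℂ`, so
`β = α ^ k` for the conjugate `α = ψ λ` of `λ`. Either `α = λ`, and then `β = λ ^ k`, or
`‖β‖ = ‖α‖ ^ k < λ ^ k`.
-/

open Polynomial IntermediateField

theorem exists_aeval_minpoly_eq_zero_and_aeval_eq {K L : Type*} [Field K] [Field L]
    [IsAlgClosed L] [Algebra K L] {x : L} (hx : IsIntegral K x) (p : K[X]) {β : L}
    (hβ : aeval β (minpoly K (aeval x p)) = 0) :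
    ∃ α : L, aeval α (minpoly K x) = 0 ∧ aeval α p = β := by
  have : FiniteDimensional K K⟮x⟯ := adjoin.finiteDimensional hx
  have : Algebra.IsAlgebraic K K⟮x⟯ := Algebra.IsAlgebraic.of_finite K _
  set g := AdjoinSimple.gen K x
  have hminpoly : minpoly K (aeval g p) = minpoly K (aeval x p) := by
    rw [← minpoly.algebraMap_eq (algebraMap K⟮x⟯ L).injective, ← aeval_algebraMap_apply,
      AdjoinSimple.algebraMap_gen]
  have hβ_mem : β ∈ (minpoly K (aeval g p)).rootSet L :=
    mem_rootSet.2 ⟨minpoly.ne_zero (IsIntegral.of_finite K _), hminpoly ▸ hβ⟩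
  obtain ⟨ψ, hψ⟩ := (Algebra.IsAlgebraic.range_eval_eq_rootSet_minpoly L _).symm.subset hβ_mem
  refine ⟨ψ g, ?_, ?_⟩
  · rw [aeval_algHom_apply, aeval_gen_minpoly, map_zero]
  · rw [aeval_algHom_apply]; exact hψ

theorem minpoly_rat_ofReal (r : ℝ) : minpoly ℚ (r : ℂ) = minpoly ℚ r :=
  minpoly.algebraMap_eq (algebraMap ℝ ℂ).injective r

theorem IsPerronNumber.pow {lam : ℝ} (h : IsPerronNumber lam) {k : ℕ} (hk : k ≠ 0) :
    IsPerronNumber (lam ^ k) := by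
  obtain ⟨hint, hgt, hroots⟩ := h
  refine ⟨hint.pow k, one_lt_pow₀ hgt hk, fun β hβ hβne => ?_⟩
  have hint_ℂ : IsIntegral ℚ (lam : ℂ) := hint.tower_top.algebraMap
  obtain ⟨α, hα, rfl⟩ := exists_aeval_minpoly_eq_zero_and_aeval_eq hint_ℂ (X ^ k) (β := β)
    (by rwa [aeval_X_pow, ← Complex.ofReal_pow, minpoly_rat_ofReal])
  rw [aeval_X_pow] at hβne ⊢
  rw [minpoly_rat_ofReal] at hα
  have hα_ne : α ≠ lam := by
    rintro rfl
    exact hβne (Complex.ofReal_pow lam k).symm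
  calc ‖α ^ k‖ = ‖α‖ ^ k := norm_pow α k
    _ < lam ^ k := pow_lt_pow_left₀ (hroots α hα hα_ne) (norm_nonneg α) hk

theorem stmt_18 (lam : ℝ) (h : IsPerronNumber lam) (k : ℕ) (hk : 0 < k) :
    IsPerronNumber (lam ^ k) :=
  h.pow hk.ne'
end
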